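/- Let k be a positive integer, x a real number with |kx| < 1, and s a complex number with Re(s) > 2. Then Σ_{n=1}^∞ N_k(x:2n−1)/(2n−1)^{s−1} = (Σ_{n odd, n ≥ 1} φ(n)/n^s) · (Σ_{m odd, m ≥ 1} (kx)^m/m^s), where both factors on the right converge absolutely. -/

import Mathlib

open scoped BigOperators

/-- `N_k(x : n) = (1/n) * ∑_{d ∣ n} φ(n/d) k^d x^d`. -/
noncomputable def Nk (k : ℕ) (x : ℝ) (n : ℕ) : ℝ :=
  (1 / (n : ℝ)) * ∑ d ∈ n.divisors, (Nat.totient (n / d) : ℝ) * (k : ℝ) ^ d * x ^ d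

/-!
Since `n * N_k(x:n) = ∑_{ab = n} φ(a) (kx)^b` is a Dirichlet convolution, the left-hand side is
the L-series of `φ ⍟ (kx)^·` restricted to odd integers. Restricting to odd integers commutes with
Dirichlet convolution (a product is odd iff both factors are), so the series factors as the
product of the odd parts of the L-series of `φ` and of `(kx)^·`, both absolutely convergent
for `Re s > 2` because `φ(n) ≤ n` and `|kx| ≤ 1`.
-/

open LSeries LSeries.notation

lemma Nat.two_mul_add_one_injective : Function.Injective (fun m : ℕ => 2 * m + 1) :=
  fun a b h => by simp_all

lemma LSeries.indicator_odd_convolution {R : Type*} [Semiring R] (f g : ℕ → R) :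
    {n | Odd n}.indicator f ⍟ {n | Odd n}.indicator g = {n | Odd n}.indicator (f ⍟ g) := by
  ext n
  simp only [convolution_def, Set.indicator_apply, Set.mem_ofPred_eq]
  split_ifs with hn
  · refine Finset.sum_congr rfl fun p hp => ?_
    have hodd : Odd p.1 ∧ Odd p.2 :=
      Nat.odd_mul.mp ((Nat.mem_divisorsAntidiagonal.mp hp).1 ▸ hn)
    rw [if_pos hodd.1, if_pos hodd.2]
  · refine Finset.sum_eq_zero fun p hp => ?_
    have hodd : ¬(Odd p.1 ∧ Odd p.2) := by
      rwa [← Nat.odd_mul, (Nat.mem_divisorsAntidiagonal.mp hp).1]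
    by_cases h₁ : Odd p.1
    · rw [if_neg fun h₂ => hodd ⟨h₁, h₂⟩, mul_zero]
    · rw [if_neg h₁, zero_mul]

lemma LSeries.LSeries_indicator_odd (f : ℕ → ℂ) (s : ℂ) :
    LSeries ({n | Odd n}.indicator f) s = ∑' m : ℕ, f (2 * m + 1) / ((2 * m + 1 : ℕ) : ℂ) ^ s := by
  have hsupport : (term ({n | Odd n}.indicator f) s).support ⊆ Set.range (2 * · + 1) := by
    intro n hn
    obtain ⟨m, rfl⟩ : Odd n := by
      by_contra hodd
      exact hn (by simp [term, hodd])
    exact ⟨m, rfl⟩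
  rw [LSeries, ← Nat.two_mul_add_one_injective.tsum_eq hsupport]
  refine tsum_congr fun m => ?_
  rw [term_of_ne_zero (by omega), Set.indicator_of_mem (s := {n | Odd n}) (odd_two_mul_add_one m)]

lemma LSeriesSummable.indicator {f : ℕ → ℂ} {s : ℂ} (hf : LSeriesSummable f s) (S : Set ℕ) :
    LSeriesSummable (S.indicator f) s :=
  hf.norm.of_norm_bounded fun _ => norm_term_le s (norm_indicator_le_norm_self _ _)

lemma LSeriesSummable.summable_norm_odd {f : ℕ → ℂ} {s : ℂ} (hf : LSeriesSummable f s) :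
    Summable fun m : ℕ => ‖f (2 * m + 1) / ((2 * m + 1 : ℕ) : ℂ) ^ s‖ :=
  (hf.norm.comp_injective Nat.two_mul_add_one_injective).congr fun m => by
    simp only [Function.comp_apply, term_of_ne_zero (by omega : 2 * m + 1 ≠ 0)]

lemma LSeriesSummable_totient {s : ℂ} (hs : 2 < s.re) :
    LSeriesSummable (fun n => (n.totient : ℂ)) s :=
  LSeriesSummable_of_le_const_mul_rpow hs ⟨1, fun n _ => by
    norm_num
    exact_mod_cast Nat.totient_le n⟩

lemma LSeriesSummable_pow {c : ℂ} (hc : ‖c‖ ≤ 1) {s : ℂ} (hs : 1 < s.re) :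
    LSeriesSummable (fun n => c ^ n) s :=
  LSeriesSummable_of_bounded_of_one_lt_re (m := 1) (fun n _ => by
    simpa using pow_le_one₀ (norm_nonneg c) hc) hs

lemma natCast_mul_Nk (k : ℕ) (x : ℝ) {n : ℕ} (hn : n ≠ 0) :
    (n : ℂ) * Nk k x n = ((fun n => (n.totient : ℂ)) ⍟ fun n => (((k : ℝ) * x : ℝ) : ℂ) ^ n) n := by
  simp only [convolution_def]
  rw [Nat.sum_divisorsAntidiagonal' (f := fun a b => (a.totient : ℂ) * _ ^ b), Nk]
  push_cast
  rw [← mul_assoc, mul_one_div_cancel (Nat.cast_ne_zero.mpr hn), one_mul]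
  simp only [mul_pow, mul_assoc]

lemma Complex.div_cpow_sub_one (a : ℂ) {z : ℂ} (hz : z ≠ 0) (s : ℂ) :
    a / z ^ (s - 1) = z * a / z ^ s := by
  rw [Complex.cpow_sub _ _ hz, Complex.cpow_one]
  field_simp

theorem stmt9_general (k : ℕ) (x : ℝ) (hx : |(k : ℝ) * x| < 1)
    (s : ℂ) (hs : 2 < s.re) :
    Summable (fun n : ℕ =>
      ‖((Nat.totient (2 * n + 1) : ℕ) : ℂ) / ((2 * n + 1 : ℕ) : ℂ) ^ s‖) ∧
    Summable (fun m : ℕ =>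
      ‖((((k : ℝ) * x : ℝ) : ℂ)) ^ (2 * m + 1) / ((2 * m + 1 : ℕ) : ℂ) ^ s‖) ∧
    ∑' n : ℕ, ((Nk k x (2 * n + 1) : ℝ) : ℂ) / ((2 * n + 1 : ℕ) : ℂ) ^ (s - 1)
      = (∑' n : ℕ, ((Nat.totient (2 * n + 1) : ℕ) : ℂ) / ((2 * n + 1 : ℕ) : ℂ) ^ s) *
        (∑' m : ℕ, ((((k : ℝ) * x : ℝ) : ℂ)) ^ (2 * m + 1) / ((2 * m + 1 : ℕ) : ℂ) ^ s) := by
  have htotient := LSeriesSummable_totient hs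
  have hpow := LSeriesSummable_pow (c := (((k : ℝ) * x : ℝ) : ℂ))
    (by rw [Complex.norm_real, Real.norm_eq_abs]; exact hx.le) (by linarith)
  refine ⟨htotient.summable_norm_odd, hpow.summable_norm_odd, ?_⟩
  have hodd_part : ∑' m : ℕ, ((Nk k x (2 * m + 1) : ℝ) : ℂ) / ((2 * m + 1 : ℕ) : ℂ) ^ (s - 1)
      = LSeries ({n | Odd n}.indicator
          ((fun n => (n.totient : ℂ)) ⍟ fun n => (((k : ℝ) * x : ℝ) : ℂ) ^ n)) s := by
    rw [LSeries_indicator_odd]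
    refine tsum_congr fun m => ?_
    rw [← natCast_mul_Nk k x (by omega), Complex.div_cpow_sub_one _ (by norm_cast) s]
  rw [hodd_part, ← indicator_odd_convolution,
    LSeries_convolution' (htotient.indicator _) (hpow.indicator _),
    LSeries_indicator_odd, LSeries_indicator_odd]

theorem stmt9 (k : ℕ) (hk : 0 < k) (x : ℝ) (hx : |(k : ℝ) * x| < 1)
    (s : ℂ) (hs : 2 < s.re) :
    Summable (fun n : ℕ =>
      ‖((Nat.totient (2 * n + 1) : ℕ) : ℂ) / ((2 * n + 1 : ℕ) : ℂ) ^ s‖) ∧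
    Summable (fun m : ℕ =>
      ‖((((k : ℝ) * x : ℝ) : ℂ)) ^ (2 * m + 1) / ((2 * m + 1 : ℕ) : ℂ) ^ s‖) ∧
    ∑' n : ℕ, ((Nk k x (2 * n + 1) : ℝ) : ℂ) / ((2 * n + 1 : ℕ) : ℂ) ^ (s - 1)
      = (∑' n : ℕ, ((Nat.totient (2 * n + 1) : ℕ) : ℂ) / ((2 * n + 1 : ℕ) : ℂ) ^ s) *
        (∑' m : ℕ, ((((k : ℝ) * x : ℝ) : ℂ)) ^ (2 * m + 1) / ((2 * m + 1 : ℕ) : ℂ) ^ s) :=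
  stmt9_general k x hx s hs
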